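/- Let c₁ > 0 be the constant (independent of x₀ and of r ∈ (0,1/2]) such that E_x τ_{B(x₀,2r)} ≤ c₁ r² for all x ∈ B(x₀,2r). Then for every x₀ ∈ ℝ^d, every r ∈ (0, 1/2], and every x ∈ B(x₀, 2r), one has P_x( ζ > τ_{B(x₀,2r)} ) ≥ exp( −‖q‖_∞ r ) − c₁ r. -/

import Mathlib

open MeasureTheory Set Filter
open scoped ENNReal NNReal Classical

noncomputable section

/-- Euclidean space `ℝ^d`. -/
abbrev Rd (d : ℕ) := EuclideanSpace ℝ (Fin d)

/-- The non-local operator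
`L f(x) = Σ a_{kl} ∂²f/∂x_k∂x_l + Σ b_k ∂f/∂x_k + ∫ (f(x+z) − f(x) − ∇f(x)·z 1_{|z|<1}) π(x,dz)`. -/
def Lop {d : ℕ} (a : Rd d → Matrix (Fin d) (Fin d) ℝ) (b : Rd d → Rd d)
    (π : Rd d → Measure (Rd d)) (f : Rd d → ℝ) (x : Rd d) : ℝ :=
  (∑ k : Fin d, ∑ l : Fin d, a x k l *
      fderiv ℝ (fun y => fderiv ℝ f y (EuclideanSpace.single l (1:ℝ))) x
        (EuclideanSpace.single k (1:ℝ)))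
    + (∑ k : Fin d, b x k * fderiv ℝ f x (EuclideanSpace.single k (1:ℝ)))
    + ∫ z, (f (x + z) - f x - (if ‖z‖ < 1 then fderiv ℝ f x z else 0)) ∂(π x)

/-- The (conservative strong Markov) solution of the martingale problem for `(L, C_b²(ℝ^d))`,
where the coefficients satisfy: `a` continuous, bounded and uniformly elliptic, `b` bounded,
and `∫ (1 ∧ |z|²) sup_x π(x,dz) < ∞`. -/
structure JumpDiffusion (d : ℕ) (Ω : Type) [mΩ : MeasurableSpace Ω] where
  X : ℝ → Ω → Rd d
  P : Rd d → Measure Ω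
  F : Filtration ℝ≥0 mΩ
  a : Rd d → Matrix (Fin d) (Fin d) ℝ
  b : Rd d → Rd d
  π : Rd d → Measure (Rd d)
  isProb : ∀ x, IsProbabilityMeasure (P x)
  meas : ∀ t, Measurable (X t)
  adapted : Adapted F (fun (t : ℝ≥0) ω => X (t : ℝ) ω)
  start : ∀ x, P x {ω | X 0 ω = x} = 1
  right_cont : ∀ ω t, ContinuousWithinAt (fun s => X s ω) (Ici t) t
  left_lim : ∀ ω t, ∃ L, Tendsto (fun s => X s ω) (nhdsWithin t (Iio t)) (nhds L)
  a_cont : ∀ k l, Continuous fun x => a x k l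
  a_elliptic : ∃ lam : ℝ, 1 ≤ lam ∧ ∀ (x : Rd d) (ξ : Rd d),
      lam⁻¹ * ‖ξ‖ ^ 2 ≤ ∑ k, ∑ l, a x k l * ξ k * ξ l ∧
      ∑ k, ∑ l, a x k l * ξ k * ξ l ≤ lam * ‖ξ‖ ^ 2
  b_bdd : ∃ Kb : ℝ, ∀ x, ‖b x‖ ≤ Kb
  π_K : ∫⁻ z, ENNReal.ofReal (min 1 (‖z‖ ^ 2)) ∂(⨆ x, π x) < ⊤
  mart : ∀ f : Rd d → ℝ, ContDiff ℝ 2 f →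
      (∃ Kf : ℝ, ∀ x, |f x| + ‖fderiv ℝ f x‖ + ‖fderiv ℝ (fderiv ℝ f) x‖ ≤ Kf) →
      ∀ x, Martingale
        (fun (t : ℝ≥0) ω => f (X (t : ℝ) ω) - ∫ s in Ioc (0:ℝ) (t : ℝ), Lop a b π f (X s ω))
        F (P x)

/-- The standard exponential distribution (law of the auxiliary killing variable `η`). -/
def expM : Measure ℝ :=
  (volume.restrict (Ioi (0:ℝ))).withDensity fun u => ENNReal.ofReal (Real.exp (-u))

/-- First hitting time of `A` by `X` (with value `∞` if `A` is never hit). -/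
def hitT {d : ℕ} {Ω : Type} (X : ℝ → Ω → Rd d) (A : Set (Rd d)) (ω : Ω) : ℝ≥0∞ :=
  sInf (ENNReal.ofReal '' {t : ℝ | 0 ≤ t ∧ X t ω ∈ A})

/-- First exit time of `X` from `D`. -/
def exitT {d : ℕ} {Ω : Type} (X : ℝ → Ω → Rd d) (D : Set (Rd d)) (ω : Ω) : ℝ≥0∞ :=
  hitT X Dᶜ ω

/-- The lifetime `ζ = inf{t > 0 : ∫₀ᵗ q(X_s) ds > η}` of the subprocess of `X` killed at
rate `q`; the sample point of the enlarged probability space is `p = (ω, η)`. -/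
def lifeT {d : ℕ} {Ω : Type} (X : ℝ → Ω → Rd d) (q : Rd d → ℝ) (p : Ω × ℝ) : ℝ≥0∞ :=
  sInf (ENNReal.ofReal '' {t : ℝ | 0 < t ∧ p.2 < ∫ s in Ioc (0:ℝ) t, q (X s p.1)})

/-- First hitting time `σ^Z_A` of `A` by the killed process `Z`. -/
def hitZ {d : ℕ} {Ω : Type} (X : ℝ → Ω → Rd d) (q : Rd d → ℝ) (A : Set (Rd d))
    (p : Ω × ℝ) : ℝ≥0∞ :=
  sInf (ENNReal.ofReal '' {t : ℝ | 0 ≤ t ∧ ENNReal.ofReal t < lifeT X q p ∧ X t p.1 ∈ A})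

/-- First exit time `τ^Z_D` of the killed process `Z` from `D` (note `τ^Z_D ≤ ζ`). -/
def exitZ {d : ℕ} {Ω : Type} (X : ℝ → Ω → Rd d) (q : Rd d → ℝ) (D : Set (Rd d))
    (p : Ω × ℝ) : ℝ≥0∞ :=
  min (exitT X D p.1) (lifeT X q p)

end

/-!
The event `{τ_{B(x₀,2r)} < r} × {η ≥ ‖q‖_∞ r}` is contained in `{τ_{B(x₀,2r)} < ζ}`, because on
`[0, r]` the additive functional `∫₀ᵗ q(X_s) ds` stays below `‖q‖_∞ r ≤ η`. Its first factor has
probability at least `1 - c₁ r` by Markov's inequality applied to `E_x τ ≤ c₁ r²`, its second factor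
has probability `exp(-‖q‖_∞ r)`, and `(1 - c₁ r) e^{-‖q‖_∞ r} ≥ e^{-‖q‖_∞ r} - c₁ r`.
-/

lemma lintegral_exp_neg_Ioi (c : ℝ) :
    ∫⁻ u in Ioi c, ENNReal.ofReal (Real.exp (-u)) = ENNReal.ofReal (Real.exp (-c)) := by
  rw [← integral_exp_neg_Ioi c, ofReal_integral_eq_lintegral_ofReal (integrableOn_exp_neg_Ioi c)
    (Eventually.of_forall fun u => (Real.exp_pos (-u)).le)]

lemma expM_Ioi {c : ℝ} (hc : 0 ≤ c) : expM (Ioi c) = ENNReal.ofReal (Real.exp (-c)) := by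
  rw [expM, withDensity_apply _ measurableSet_Ioi, Measure.restrict_restrict measurableSet_Ioi,
    inter_eq_left.mpr (Ioi_subset_Ioi hc), lintegral_exp_neg_Ioi]

instance : SFinite expM := by
  unfold expM
  infer_instance

/-- `f` need not be measurable: Markov's inequality is applied on the measurable set
`(toMeasurable μ {f < c})ᶜ`, on which `c ≤ f`. -/
lemma one_sub_le_measure_lt_of_lintegral_le {α : Type*} [MeasurableSpace α] {μ : Measure α}
    [IsProbabilityMeasure μ] {f : α → ℝ≥0∞} {b c : ℝ≥0∞} (hc₀ : c ≠ 0) (hc : c ≠ ∞)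
    (hf : ∫⁻ x, f x ∂μ ≤ c * b) : 1 - b ≤ μ {x | f x < c} := by
  set A := {x | f x < c}
  set U := (toMeasurable μ A)ᶜ
  have hUm : MeasurableSet U := (measurableSet_toMeasurable μ A).compl
  have hfU : ∀ x ∈ U, c ≤ f x := fun x hx =>
    not_lt.mp fun hlt => hx (subset_toMeasurable μ A hlt)
  have hcU : c * μ U ≤ c * b :=
    calc c * μ U = ∫⁻ _ in U, c ∂μ := (setLIntegral_const U c).symm
      _ ≤ ∫⁻ x in U, f x ∂μ := setLIntegral_mono' hUm hfU
      _ ≤ ∫⁻ x, f x ∂μ := setLIntegral_le_lintegral U f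
      _ ≤ c * b := hf
  have hμU : μ U = 1 - μ A := by
    rw [prob_compl_eq_one_sub (measurableSet_toMeasurable μ A), measure_toMeasurable]
  rw [hμU, ENNReal.mul_le_mul_iff_right hc₀ hc] at hcU
  exact tsub_le_iff_tsub_le.mp hcU

lemma setIntegral_Ioc_zero_le_mul {g : ℝ → ℝ} {K : ℝ} (hg : ∀ s, |g s| ≤ K) {t : ℝ}
    (ht : 0 ≤ t) : ∫ s in Ioc (0 : ℝ) t, g s ≤ K * t := by
  have hnorm := norm_setIntegral_le_of_norm_le_const (μ := volume) (f := g)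
    (measure_Ioc_lt_top (a := 0) (b := t)) fun s _ => hg s
  rw [Real.norm_eq_abs, measureReal_def, Real.volume_Ioc, sub_zero, ENNReal.toReal_ofReal ht]
    at hnorm
  exact (le_abs_self _).trans hnorm

lemma ofReal_le_lifeT {d : ℕ} {Ω : Type} (X : ℝ → Ω → Rd d) {q : Rd d → ℝ} {K r : ℝ}
    (hq0 : ∀ x, 0 ≤ q x) (hqK : ∀ x, q x ≤ K) {p : Ω × ℝ} (hp : K * r ≤ p.2) :
    ENNReal.ofReal r ≤ lifeT X q p := by
  refine le_sInf ?_
  rintro _ ⟨t, ⟨ht0, hlt⟩, rfl⟩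
  refine ENNReal.ofReal_le_ofReal (not_lt.mp fun htr => ?_)
  have hint := setIntegral_Ioc_zero_le_mul (g := fun s => q (X s p.1))
    (fun s => (abs_of_nonneg (hq0 _)).trans_le (hqK _)) ht0.le
  nlinarith [le_trans (hq0 0) (hqK 0)]

lemma ofReal_sub_le_one_sub_mul {a b : ℝ} (ha : 0 ≤ a) (hb : 0 ≤ b) (hb1 : b ≤ 1) :
    ENNReal.ofReal (b - a) ≤ (1 - ENNReal.ofReal a) * ENNReal.ofReal b := by
  rw [← ENNReal.ofReal_one, ← ENNReal.ofReal_sub 1 ha, ← ENNReal.ofReal_mul' hb]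
  exact ENNReal.ofReal_le_ofReal (by nlinarith)

theorem statement5_general (d : ℕ) (Ω : Type) [MeasurableSpace Ω] (J : JumpDiffusion d Ω)
    (q : Rd d → ℝ) (hq0 : ∀ x, 0 ≤ q x) (hqb : ∃ Kq, ∀ x, q x ≤ Kq)
    (c₁ : ℝ) (hc₁ : 0 < c₁)
    (hbound : ∀ (x₀ : Rd d) (r : ℝ), 0 < r → r ≤ 1 / 2 →
      ∀ x ∈ Metric.ball x₀ (2 * r),
        ∫⁻ ω, exitT J.X (Metric.ball x₀ (2 * r)) ω ∂(J.P x) ≤ ENNReal.ofReal (c₁ * r ^ 2)) :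
    ∀ (x₀ : Rd d) (r : ℝ), 0 < r → r ≤ 1 / 2 →
      ∀ x ∈ Metric.ball x₀ (2 * r),
        ENNReal.ofReal (Real.exp (-((⨆ y, q y) * r)) - c₁ * r) ≤
          ((J.P x).prod expM)
            {p | exitT J.X (Metric.ball x₀ (2 * r)) p.1 < lifeT J.X q p} := by
  intro x₀ r hr hr2 x hx
  have := J.isProb x
  set τ := exitT J.X (Metric.ball x₀ (2 * r))
  set K := ⨆ y, q y
  obtain ⟨Kq, hKq⟩ := hqb
  have hqK : ∀ y, q y ≤ K := le_ciSup ⟨Kq, by rintro _ ⟨y, rfl⟩; exact hKq y⟩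
  have hKr : 0 ≤ K * r := mul_nonneg ((hq0 0).trans (hqK 0)) hr.le
  have hsub : {ω | τ ω < ENNReal.ofReal r} ×ˢ Ici (K * r) ⊆ {p | τ p.1 < lifeT J.X q p} :=
    fun p ⟨hτ, hη⟩ => lt_of_lt_of_le hτ (ofReal_le_lifeT J.X hq0 hqK hη)
  have hτr : 1 - ENNReal.ofReal (c₁ * r) ≤ J.P x {ω | τ ω < ENNReal.ofReal r} := by
    refine one_sub_le_measure_lt_of_lintegral_le (ENNReal.ofReal_pos.mpr hr).ne'
      ENNReal.ofReal_ne_top ?_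
    rw [← ENNReal.ofReal_mul hr.le]
    convert hbound x₀ r hr hr2 x hx using 2
    ring
  have hη : ENNReal.ofReal (Real.exp (-(K * r))) ≤ expM (Ici (K * r)) :=
    (expM_Ioi hKr).symm.le.trans (measure_mono Ioi_subset_Ici_self)
  calc ENNReal.ofReal (Real.exp (-(K * r)) - c₁ * r)
      ≤ (1 - ENNReal.ofReal (c₁ * r)) * ENNReal.ofReal (Real.exp (-(K * r))) :=
        ofReal_sub_le_one_sub_mul (mul_nonneg hc₁.le hr.le) (Real.exp_pos _).le
          (Real.exp_le_one_iff.mpr (neg_nonpos.mpr hKr))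
    _ ≤ J.P x {ω | τ ω < ENNReal.ofReal r} * expM (Ici (K * r)) := mul_le_mul' hτr hη
    _ = ((J.P x).prod expM) ({ω | τ ω < ENNReal.ofReal r} ×ˢ Ici (K * r)) :=
        (Measure.prod_prod _ _).symm
    _ ≤ ((J.P x).prod expM) {p | τ p.1 < lifeT J.X q p} := measure_mono hsub

/-- If `c₁ > 0` is a constant (independent of `x₀` and of `r ∈ (0,1/2]`) such
that `E_x τ_{B(x₀,2r)} ≤ c₁ r²` for all `x ∈ B(x₀,2r)`, then for every `x₀ ∈ ℝ^d`, every
`r ∈ (0,1/2]` and every `x ∈ B(x₀,2r)`,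
`P_x(ζ > τ_{B(x₀,2r)}) ≥ exp(−‖q‖_∞ r) − c₁ r`. -/
theorem statement5 (d : ℕ) (Ω : Type) [MeasurableSpace Ω] (J : JumpDiffusion d Ω)
    (q : Rd d → ℝ) (hqm : Measurable q) (hq0 : ∀ x, 0 ≤ q x) (hqb : ∃ Kq, ∀ x, q x ≤ Kq)
    (c₁ : ℝ) (hc₁ : 0 < c₁)
    (hbound : ∀ (x₀ : Rd d) (r : ℝ), 0 < r → r ≤ 1 / 2 →
      ∀ x ∈ Metric.ball x₀ (2 * r),
        ∫⁻ ω, exitT J.X (Metric.ball x₀ (2 * r)) ω ∂(J.P x) ≤ ENNReal.ofReal (c₁ * r ^ 2)) :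
    ∀ (x₀ : Rd d) (r : ℝ), 0 < r → r ≤ 1 / 2 →
      ∀ x ∈ Metric.ball x₀ (2 * r),
        ENNReal.ofReal (Real.exp (-((⨆ y, q y) * r)) - c₁ * r) ≤
          ((J.P x).prod expM)
            {p | exitT J.X (Metric.ball x₀ (2 * r)) p.1 < lifeT J.X q p} :=
  statement5_general d Ω J q hq0 hqb c₁ hc₁ hbound
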